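/- arXiv:math/0503235 — 2 statements merged into one kernel-verified Lean document; each statement's English description precedes it below -/
import Mathlib

section
/- (Lemma 1.) The operator D maps the set Q = { f : ℝ^d → ℝ : f ≤ h pointwise and A f ≥ f pointwise } into itself: if f ∈ Q then D f ∈ Q. -/
open Finset

/-- The weighted arithmetic average operator:
`(A f)(y) = ∑ k, α k * f (y - x k)`. -/
noncomputable def avgOp (d m : ℕ) (α : Fin m → ℝ) (x : Fin m → (Fin d → ℝ))
    (f : (Fin d → ℝ) → ℝ) : (Fin d → ℝ) → ℝ :=
  fun y => ∑ k, α k * f (y - x k)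

/-- The Bermudan iteration operator: `(D f)(y) = max (c * (A f)(y)) (g y)`. -/
noncomputable def bermOp (d m : ℕ) (α : Fin m → ℝ) (x : Fin m → (Fin d → ℝ))
    (c : ℝ) (g : (Fin d → ℝ) → ℝ) (f : (Fin d → ℝ) → ℝ) : (Fin d → ℝ) → ℝ :=
  fun y => max (c * avgOp d m α x f y) (g y)

/-!
`A` is a positive linear operator. Positivity makes the `A`-subharmonic functions (`f ≤ A f`)
closed under pointwise maxima and makes `A` preserve them; homogeneity lets a nonnegative factor
`c` pass through `A`. Hence `D f = max (c • A f) g` is subharmonic whenever `f` and `g` are.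
The bound `D f ≤ h` holds because `h` is nonnegative and `A`-superharmonic, so that
`c • A f ≤ c • A h ≤ c • h ≤ h`, while `g ≤ h` by assumption.
-/

section

variable {d m : ℕ} {α : Fin m → ℝ} {x : Fin m → (Fin d → ℝ)}

lemma avgOp_mono (hα : ∀ k, 0 ≤ α k) {u v : (Fin d → ℝ) → ℝ} (huv : u ≤ v) :
    avgOp d m α x u ≤ avgOp d m α x v := fun _ =>
  sum_le_sum fun k _ => mul_le_mul_of_nonneg_left (huv _) (hα k)

lemma avgOp_const_mul (c : ℝ) (f : (Fin d → ℝ) → ℝ) :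
    avgOp d m α x (fun y => c * f y) = fun y => c * avgOp d m α x f y := by
  funext y
  simp only [avgOp, mul_sum, mul_left_comm]

lemma const_mul_le_avgOp {c : ℝ} (hc : 0 ≤ c) {f : (Fin d → ℝ) → ℝ}
    (hf : f ≤ avgOp d m α x f) :
    (fun y => c * f y) ≤ avgOp d m α x (fun y => c * f y) := by
  rw [avgOp_const_mul]
  exact fun y => mul_le_mul_of_nonneg_left (hf y) hc

lemma max_le_avgOp_max (hα : ∀ k, 0 ≤ α k) {u v : (Fin d → ℝ) → ℝ}
    (hu : u ≤ avgOp d m α x u) (hv : v ≤ avgOp d m α x v) :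
    (fun y => max (u y) (v y)) ≤ avgOp d m α x (fun y => max (u y) (v y)) := fun y =>
  max_le ((hu y).trans (avgOp_mono hα (fun _ => le_max_left _ _) y))
    ((hv y).trans (avgOp_mono hα (fun _ => le_max_right _ _) y))

lemma bermOp_le_avgOp_bermOp (hα : ∀ k, 0 ≤ α k) {c : ℝ} (hc : 0 ≤ c)
    {g f : (Fin d → ℝ) → ℝ} (hg : g ≤ avgOp d m α x g) (hf : f ≤ avgOp d m α x f) :
    bermOp d m α x c g f ≤ avgOp d m α x (bermOp d m α x c g f) :=
  max_le_avgOp_max hα (const_mul_le_avgOp hc (avgOp_mono hα hf)) hg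

lemma bermOp_le (hα : ∀ k, 0 ≤ α k) {c : ℝ} (hc₀ : 0 ≤ c) (hc₁ : c ≤ 1)
    {g h f : (Fin d → ℝ) → ℝ} (hh : avgOp d m α x h ≤ h) (hh₀ : 0 ≤ h) (hgh : g ≤ h)
    (hfh : f ≤ h) :
    bermOp d m α x c g f ≤ h := fun y =>
  max_le
    (calc c * avgOp d m α x f y ≤ c * h y :=
          mul_le_mul_of_nonneg_left ((avgOp_mono hα hfh y).trans (hh y)) hc₀
      _ ≤ h y := mul_le_of_le_one_left (hh₀ y) hc₁)
    (hgh y)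

end

theorem bermOp_maps_Q_general (d m : ℕ)
    (α : Fin m → ℝ) (hα : ∀ k, α k ∈ Set.Icc (0:ℝ) 1)
    (x : Fin m → (Fin d → ℝ))
    (c : ℝ) (hc : c ∈ Set.Ioo (0:ℝ) 1)
    (g h : (Fin d → ℝ) → ℝ)
    (hg : ∀ y, g y ≤ avgOp d m α x g y)
    (hh : ∀ y, avgOp d m α x h y = h y)
    (hgh : ∀ y, max 0 (g y) ≤ h y)
    (f : (Fin d → ℝ) → ℝ)
    (hfQ : (∀ y, f y ≤ h y) ∧ (∀ y, f y ≤ avgOp d m α x f y)) :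
    (∀ y, bermOp d m α x c g f y ≤ h y) ∧
      (∀ y, bermOp d m α x c g f y ≤ avgOp d m α x (bermOp d m α x c g f) y) := by
  obtain ⟨hfh, hfA⟩ := hfQ
  have hα₀ : ∀ k, 0 ≤ α k := fun k => (hα k).1
  have hh₀ : 0 ≤ h := fun y => (le_max_left _ _).trans (hgh y)
  have hgh' : g ≤ h := fun y => (le_max_right _ _).trans (hgh y)
  exact ⟨bermOp_le hα₀ hc.1.le hc.2.le (fun y => (hh y).le) hh₀ hgh' hfh,
    bermOp_le_avgOp_bermOp hα₀ hc.1.le hg hfA⟩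

/-- Lemma 1: `D` maps `Q = {f : f ≤ h and A f ≥ f}` into itself. -/
theorem bermOp_maps_Q (d m : ℕ) (hm : 1 ≤ m)
    (α : Fin m → ℝ) (hα : ∀ k, α k ∈ Set.Icc (0:ℝ) 1) (hsum : ∑ k, α k = 1)
    (x : Fin m → (Fin d → ℝ))
    (c : ℝ) (hc : c ∈ Set.Ioo (0:ℝ) 1)
    (g h : (Fin d → ℝ) → ℝ)
    (hg : ∀ y, g y ≤ avgOp d m α x g y)
    (hh : ∀ y, avgOp d m α x h y = h y)
    (hgh : ∀ y, max 0 (g y) ≤ h y)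
    (f : (Fin d → ℝ) → ℝ)
    (hfQ : (∀ y, f y ≤ h y) ∧ (∀ y, f y ≤ avgOp d m α x f y)) :
    (∀ y, bermOp d m α x c g f y ≤ h y) ∧
      (∀ y, bermOp d m α x c g f y ≤ avgOp d m α x (bermOp d m α x c g f) y) :=
  bermOp_maps_Q_general d m α hα x c hc g h hg hh hgh f hfQ
end

section
/- (Linear convergence of the successive differences.) Assume in addition that h is bounded above by a constant M ≥ 0. Then for all n ∈ ℕ₀, sup_{y ∈ ℝ^d} |q_{n+1}(y) − q_n(y)| ≤ c^n · sup_{y ∈ ℝ^d} |q_1(y) − q_0(y)|, where q_n = D^n(max(g, 0)). -/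
open Finset

/-!
The average `A` is monotone and fixes constants, so `|A f - A f'| ≤ ε` whenever `|f - f'| ≤ ε`;
since `|max a e - max b e| ≤ |a - b|`, the operator `D` is therefore a `c`-contraction for the
pointwise sup distance, and iterating gives `|q_{n+1} - q_n| ≤ c ^ n * sup |q_1 - q_0|`.
The bound `0 ≤ q_0, q_1 ≤ M` is what makes that supremum finite.
-/

section Contraction

variable {d m : ℕ} {α : Fin m → ℝ} {x : Fin m → (Fin d → ℝ)}

theorem avgOp_mem_Icc (hα : ∀ k, 0 ≤ α k) (hsum : ∑ k, α k = 1)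
    {f : (Fin d → ℝ) → ℝ} {a b : ℝ} (hf : ∀ y, f y ∈ Set.Icc a b) (y : Fin d → ℝ) :
    avgOp d m α x f y ∈ Set.Icc a b := by
  have sum_mul_const (r : ℝ) : ∑ k, α k * r = r := by rw [← sum_mul, hsum, one_mul]
  constructor
  · calc a = ∑ k, α k * a := (sum_mul_const a).symm
      _ ≤ avgOp d m α x f y :=
        sum_le_sum fun k _ => mul_le_mul_of_nonneg_left (hf _).1 (hα k)
  · calc avgOp d m α x f y ≤ ∑ k, α k * b :=
          sum_le_sum fun k _ => mul_le_mul_of_nonneg_left (hf _).2 (hα k)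
      _ = b := sum_mul_const b

theorem avgOp_sub_avgOp (f f' : (Fin d → ℝ) → ℝ) (y : Fin d → ℝ) :
    avgOp d m α x f y - avgOp d m α x f' y = avgOp d m α x (f - f') y := by
  simp only [avgOp, Pi.sub_apply, mul_sub, sum_sub_distrib]

theorem abs_avgOp_sub_avgOp_le (hα : ∀ k, 0 ≤ α k) (hsum : ∑ k, α k = 1)
    {f f' : (Fin d → ℝ) → ℝ} {ε : ℝ} (hff' : ∀ y, |f y - f' y| ≤ ε) (y : Fin d → ℝ) :
    |avgOp d m α x f y - avgOp d m α x f' y| ≤ ε := by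
  rw [avgOp_sub_avgOp, abs_le, ← Set.mem_Icc]
  exact avgOp_mem_Icc hα hsum (fun y => abs_le.mp (hff' y)) y

variable {c : ℝ} {g : (Fin d → ℝ) → ℝ}

theorem abs_bermOp_sub_bermOp_le (hα : ∀ k, 0 ≤ α k) (hsum : ∑ k, α k = 1) (hc : 0 ≤ c)
    {f f' : (Fin d → ℝ) → ℝ} {ε : ℝ} (hff' : ∀ y, |f y - f' y| ≤ ε) (y : Fin d → ℝ) :
    |bermOp d m α x c g f y - bermOp d m α x c g f' y| ≤ c * ε :=
  calc |bermOp d m α x c g f y - bermOp d m α x c g f' y|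
      ≤ |c * avgOp d m α x f y - c * avgOp d m α x f' y| := abs_max_sub_max_le_abs _ _ _
    _ = c * |avgOp d m α x f y - avgOp d m α x f' y| := by
      rw [← mul_sub, abs_mul, abs_of_nonneg hc]
    _ ≤ c * ε := mul_le_mul_of_nonneg_left (abs_avgOp_sub_avgOp_le hα hsum hff' y) hc

theorem abs_iterate_bermOp_succ_sub_le (hα : ∀ k, 0 ≤ α k) (hsum : ∑ k, α k = 1)
    (hc : 0 ≤ c) {f : (Fin d → ℝ) → ℝ} {ε : ℝ}
    (hf : ∀ y, |bermOp d m α x c g f y - f y| ≤ ε) (n : ℕ) (y : Fin d → ℝ) :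
    |(bermOp d m α x c g)^[n + 1] f y - (bermOp d m α x c g)^[n] f y| ≤ c ^ n * ε := by
  induction n generalizing y with
  | zero => simpa using hf y
  | succ n ih =>
    simp only [Function.iterate_succ_apply'] at ih ⊢
    rw [pow_succ', mul_assoc]
    exact abs_bermOp_sub_bermOp_le hα hsum hc ih y

theorem bermOp_mem_Icc (hα : ∀ k, 0 ≤ α k) (hsum : ∑ k, α k = 1) (hc : c ∈ Set.Icc 0 1)
    {f : (Fin d → ℝ) → ℝ} {M : ℝ} (hf : ∀ y, f y ∈ Set.Icc 0 M) (hg : ∀ y, g y ≤ M)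
    (y : Fin d → ℝ) : bermOp d m α x c g f y ∈ Set.Icc 0 M := by
  obtain ⟨hA0, hAM⟩ := avgOp_mem_Icc (x := x) hα hsum hf y
  refine ⟨le_max_of_le_left (mul_nonneg hc.1 hA0), max_le ?_ (hg y)⟩
  exact (mul_le_of_le_one_left hA0 hc.2).trans hAM

end Contraction

theorem q_diff_linear_convergence_general (d m : ℕ)
    (α : Fin m → ℝ) (hα : ∀ k, α k ∈ Set.Icc (0:ℝ) 1) (hsum : ∑ k, α k = 1)
    (x : Fin m → (Fin d → ℝ))
    (c : ℝ) (hc : c ∈ Set.Ioo (0:ℝ) 1)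
    (g h : (Fin d → ℝ) → ℝ)
    (hgh : ∀ y, max 0 (g y) ≤ h y)
    (M : ℝ) (hhM : ∀ y, h y ≤ M)
    (q : ℕ → (Fin d → ℝ) → ℝ)
    (hq : ∀ n, q n = (bermOp d m α x c g)^[n] (fun y => max (g y) 0)) :
    ∀ n : ℕ,
      (⨆ y, |q (n + 1) y - q n y|) ≤ c ^ n * ⨆ y, |q 1 y - q 0 y| := by
  intro n
  have hα0 : ∀ k, 0 ≤ α k := fun k => (hα k).1
  have hq0 : ∀ y, q 0 y ∈ Set.Icc 0 M := fun y => by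
    rw [hq, Function.iterate_zero_apply, max_comm]
    exact ⟨le_max_left _ _, (hgh y).trans (hhM y)⟩
  have hq1 : ∀ y, q 1 y ∈ Set.Icc 0 M := fun y => by
    rw [show q 1 = bermOp d m α x c g (q 0) by rw [hq, hq]; rfl]
    exact bermOp_mem_Icc hα0 hsum (Set.Ioo_subset_Icc_self hc) hq0
      (fun y => (le_max_right _ _).trans ((hgh y).trans (hhM y))) y
  -- without this, `⨆` would be the junk value `0`
  have hbdd : BddAbove (Set.range fun y => |q 1 y - q 0 y|) :=
    ⟨M, Set.forall_mem_range.mpr fun y => abs_sub_le_of_nonneg_of_le (hq1 y).1 (hq1 y).2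
      (hq0 y).1 (hq0 y).2⟩
  have hpt : ∀ y, |q (n + 1) y - q n y| ≤ c ^ n * ⨆ y, |q 1 y - q 0 y| := by
    simp only [hq] at hbdd ⊢
    exact abs_iterate_bermOp_succ_sub_le hα0 hsum hc.1.le (fun y => le_ciSup hbdd y) n
  exact Real.iSup_le hpt
    (mul_nonneg (pow_nonneg hc.1.le n) (Real.iSup_nonneg fun _ => abs_nonneg _))

/-- linear convergence of the successive differences:
`‖q_{n+1} - q_n‖_∞ ≤ c^n * ‖q_1 - q_0‖_∞`. -/
theorem q_diff_linear_convergence (d m : ℕ) (hm : 1 ≤ m)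
    (α : Fin m → ℝ) (hα : ∀ k, α k ∈ Set.Icc (0:ℝ) 1) (hsum : ∑ k, α k = 1)
    (x : Fin m → (Fin d → ℝ))
    (c : ℝ) (hc : c ∈ Set.Ioo (0:ℝ) 1)
    (g h : (Fin d → ℝ) → ℝ)
    (hg : ∀ y, g y ≤ avgOp d m α x g y)
    (hh : ∀ y, avgOp d m α x h y = h y)
    (hgh : ∀ y, max 0 (g y) ≤ h y)
    (M : ℝ) (hM : 0 ≤ M) (hhM : ∀ y, h y ≤ M)
    (q : ℕ → (Fin d → ℝ) → ℝ)
    (hq : ∀ n, q n = (bermOp d m α x c g)^[n] (fun y => max (g y) 0)) :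
    ∀ n : ℕ,
      (⨆ y, |q (n + 1) y - q n y|) ≤ c ^ n * ⨆ y, |q 1 y - q 0 y| :=
  q_diff_linear_convergence_general d m α hα hsum x c hc g h hgh M hhM q hq
end
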